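/- arXiv:1401.7300 — 2 statements merged into one kernel-verified Lean document; each statement's English description precedes it below -/
import Mathlib

section
/- Let ε : G → Q be a group homomorphism, extended linearly to a map of group algebras ℂG → ℂQ (also denoted ε). Then for every element a ∈ ℂG all of whose coefficients are non-negative real numbers, one has ‖λ_G(a)‖ ≤ ‖λ_Q(ε(a))‖. -/
noncomputable section

open scoped ENNReal ComplexOrder Cardinal
open Filter Topology

/-- `ℓ²(G)`, the Hilbert space of square-summable complex functions on `G`. -/
abbrev ell2 (G : Type*) : Type _ := lp (fun _ : G => ℂ) 2

section LeftRegular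

variable {G : Type*} [Group G]

theorem memℓp_shift (g : G) (f : ell2 G) :
    Memℓp (fun h : G => f (g⁻¹ * h)) 2 := by
  apply memℓp_gen
  have hf : Summable fun h : G => ‖f h‖ ^ (2 : ℝ≥0∞).toReal :=
    (memℓp_gen_iff (by norm_num)).1 (lp.memℓp f)
  exact ((Equiv.mulLeft g⁻¹).summable_iff).2 hf

/-- Left translation by `g` on `ℓ²(G)` as a linear map: `(lamAux g f) h = f (g⁻¹ h)`. -/
def lamAux (g : G) : ell2 G →ₗ[ℂ] ell2 G where
  toFun f := ⟨fun h => f (g⁻¹ * h), memℓp_shift g f⟩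
  map_add' _ _ := rfl
  map_smul' _ _ := rfl

theorem norm_lamAux (g : G) (f : ell2 G) : ‖lamAux g f‖ = ‖f‖ := by
  have h2 : (0 : ℝ) < (2 : ℝ≥0∞).toReal := by norm_num
  rw [lp.norm_eq_tsum_rpow h2, lp.norm_eq_tsum_rpow h2]
  congr 1
  exact (Equiv.mulLeft g⁻¹).tsum_eq fun h => ‖f h‖ ^ (2 : ℝ≥0∞).toReal

/-- The left regular representation of `G` on `ℓ²(G)`: `(lam g f) h = f (g⁻¹ h)`. -/
def lam (g : G) : ell2 G →L[ℂ] ell2 G :=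
  LinearMap.mkContinuous (lamAux g) 1 fun f => by rw [norm_lamAux, one_mul]

end LeftRegular

/-- The linear extension of the left regular representation to the group algebra `ℂ[G]`:
`lamAlg (Σ α_g g) = Σ α_g • lam g`. -/
def lamAlg {G : Type*} [Group G] (a : MonoidAlgebra ℂ G) : ell2 G →L[ℂ] ell2 G :=
  a.coeff.sum fun g c => c • lam g

/-!
For `f ∈ ℓ²(G)` let `F ∈ ℓ²(Q)` be the vector of `ℓ²`-norms of the restrictions of `f` to the
fibers of `ε`, so that `‖F‖ = ‖f‖`. Left translation by `g` maps the fiber over `(ε g)⁻¹ q`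
onto the fiber over `q`, so the triangle inequality on each fiber gives
`‖(λ_G(a) f)|_{ε⁻¹ q}‖ ≤ Σ a_g ‖f|_{ε⁻¹((ε g)⁻¹ q)}‖ = |(λ_Q(ε a) F)(q)|`; the last equality is
where the non-negativity of the coefficients enters. Summing the squares over `q`,
`‖λ_G(a) f‖ ≤ ‖λ_Q(ε a) F‖ ≤ ‖λ_Q(ε a)‖ ‖f‖`.
-/

theorem Complex.norm_sum_of_nonneg {ι : Type*} {s : Finset ι} {c : ι → ℂ}
    (hc : ∀ i ∈ s, 0 ≤ c i) : ‖∑ i ∈ s, c i‖ = ∑ i ∈ s, ‖c i‖ := by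
  have hsum : (0 : ℂ) ≤ ∑ i ∈ s, c i := Finset.sum_nonneg hc
  exact_mod_cast (Complex.norm_of_nonneg' hsum).trans <|
    Finset.sum_congr rfl fun i hi => (Complex.norm_of_nonneg' (hc i hi)).symm

theorem lp.norm_eq_of_equiv {ι κ E : Type*} [NormedAddCommGroup E] {p : ℝ≥0∞}
    (hp : 0 < p.toReal) (e : ι ≃ κ) {x : lp (fun _ : ι => E) p} {y : lp (fun _ : κ => E) p}
    (hxy : ∀ i, y (e i) = x i) : ‖x‖ = ‖y‖ := by
  rw [lp.norm_eq_tsum_rpow hp, lp.norm_eq_tsum_rpow hp, ← e.tsum_eq]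
  simp only [hxy]

section Fibers

variable {α β : Type*} (ε : α → β)

theorem Memℓp.restrict {E : Type*} [NormedAddCommGroup E] {p : ℝ≥0∞} (hp : 0 < p.toReal)
    {f : α → E} (hf : Memℓp f p) (s : Set α) : Memℓp (fun x : s => f x) p :=
  memℓp_gen <| (hf.summable hp).subtype s

def fiberRestrict (q : β) : ell2 α →ₗ[ℂ] lp (fun _ : ε ⁻¹' {q} => ℂ) 2 where
  toFun f := ⟨fun x => f x, (lp.memℓp f).restrict (by norm_num) _⟩
  map_add' _ _ := rfl
  map_smul' _ _ := rfl

theorem fiberRestrict_apply (q : β) (f : ell2 α) (x : ε ⁻¹' {q}) :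
    fiberRestrict ε q f x = f x :=
  rfl

theorem hasSum_norm_fiberRestrict (f : ell2 α) :
    HasSum (fun q => ‖fiberRestrict ε q f‖ ^ (2 : ℝ≥0∞).toReal) (‖f‖ ^ (2 : ℝ≥0∞).toReal) := by
  have hp : 0 < (2 : ℝ≥0∞).toReal := by norm_num
  simpa only [lp.norm_rpow_eq_tsum hp, fiberRestrict_apply] using
    (lp.hasSum_norm hp f).tsum_fiberwise ε

def fiberNorms (f : ell2 α) : ell2 β :=
  ⟨fun q => (‖fiberRestrict ε q f‖ : ℂ), memℓp_gen <| by
    simpa only [Complex.norm_real, norm_norm] using (hasSum_norm_fiberRestrict ε f).summable⟩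

theorem fiberNorms_apply (f : ell2 α) (q : β) : fiberNorms ε f q = ‖fiberRestrict ε q f‖ :=
  rfl

theorem norm_fiberNorms (f : ell2 α) : ‖fiberNorms ε f‖ = ‖f‖ := by
  have hp : 0 < (2 : ℝ≥0∞).toReal := by norm_num
  refine (Real.rpow_left_inj (norm_nonneg _) (norm_nonneg _) hp.ne').1 ?_
  refine (lp.hasSum_norm hp _).unique ?_
  simpa only [fiberNorms_apply, Complex.norm_real, norm_norm] using hasSum_norm_fiberRestrict ε f

theorem norm_le_of_norm_fiberRestrict_le {f : ell2 α} {F : ell2 β}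
    (h : ∀ q, ‖fiberRestrict ε q f‖ ≤ ‖F q‖) : ‖f‖ ≤ ‖F‖ := by
  rw [← norm_fiberNorms ε f]
  refine lp.norm_mono two_ne_zero fun q => ?_
  simpa only [fiberNorms_apply, Complex.norm_real, norm_norm] using h q

end Fibers

theorem lamAlg_mapDomain {G Q : Type*} [Group Q] (φ : G → Q) (a : MonoidAlgebra ℂ G) :
    lamAlg (MonoidAlgebra.mapDomain φ a) = a.coeff.sum fun g c => c • lam (φ g) :=
  Finsupp.sum_mapDomain_index (fun _ => zero_smul ℂ _) fun _ _ _ => add_smul _ _ _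

section Regular

variable {G Q : Type*} [Group G] [Group Q]

theorem lam_apply (g : G) (f : ell2 G) (h : G) : lam g f h = f (g⁻¹ * h) :=
  rfl

theorem norm_fiberRestrict_lam (ε : G →* Q) (g : G) (f : ell2 G) (q : Q) :
    ‖fiberRestrict ε q (lam g f)‖ = ‖fiberRestrict ε ((ε g)⁻¹ * q) f‖ := by
  refine (lp.norm_eq_of_equiv (by norm_num)
    ((Equiv.mulLeft g).subtypeEquiv fun y => ?_) fun y => ?_).symm
  · simp [eq_inv_mul_iff_mul_eq]
  · simp [fiberRestrict_apply, lam_apply]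

theorem norm_fiberRestrict_lamAlg_le (ε : G →* Q) {a : MonoidAlgebra ℂ G}
    (ha : ∀ g, 0 ≤ a.coeff g) (f : ell2 G) (q : Q) :
    ‖fiberRestrict ε q (lamAlg a f)‖
      ≤ ‖lamAlg (MonoidAlgebra.mapDomainRingHom ℂ ε a) (fiberNorms ε f) q‖ := by
  have hterm : ∀ g, 0 ≤ a.coeff g * fiberNorms ε f ((ε g)⁻¹ * q) := fun g =>
    mul_nonneg (ha g) (by rw [fiberNorms_apply]; exact_mod_cast norm_nonneg _)
  calc ‖fiberRestrict ε q (lamAlg a f)‖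
      = ‖∑ g ∈ a.coeff.support, a.coeff g • fiberRestrict ε q (lam g f)‖ := by
        simp [lamAlg, Finsupp.sum]
    _ ≤ ∑ g ∈ a.coeff.support, ‖a.coeff g • fiberRestrict ε q (lam g f)‖ := norm_sum_le _ _
    _ = ∑ g ∈ a.coeff.support, ‖a.coeff g * fiberNorms ε f ((ε g)⁻¹ * q)‖ := by
        simp only [norm_smul, norm_mul, norm_fiberRestrict_lam, fiberNorms_apply,
          Complex.norm_real, norm_norm]
    _ = ‖∑ g ∈ a.coeff.support, a.coeff g * fiberNorms ε f ((ε g)⁻¹ * q)‖ :=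
        (Complex.norm_sum_of_nonneg fun g _ => hterm g).symm
    _ = ‖lamAlg (MonoidAlgebra.mapDomainRingHom ℂ ε a) (fiberNorms ε f) q‖ := by
        rw [MonoidAlgebra.mapDomainRingHom_apply, lamAlg_mapDomain, Finsupp.sum,
          sum_apply, lp.coeFn_sum, Finset.sum_apply]
        rfl

end Regular

/-- **Lemma 2.1 (b)**. For a group homomorphism `ε : G → Q` and `a ∈ ℝ₊G ⊆ ℂG` (an
element with non-negative real coefficients), `‖λ_G(a)‖ ≤ ‖λ_Q(ε(a))‖`. -/
theorem norm_lamAlg_le_of_monoidHom {G Q : Type*} [Group G] [Group Q] (ε : G →* Q)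
    (a : MonoidAlgebra ℂ G) (ha : ∀ g : G, 0 ≤ a.coeff g) :
    ‖lamAlg a‖ ≤ ‖lamAlg (MonoidAlgebra.mapDomainRingHom ℂ ε a)‖ := by
  refine ContinuousLinearMap.opNorm_le_bound _ (norm_nonneg _) fun f => ?_
  calc ‖lamAlg a f‖
      ≤ ‖lamAlg (MonoidAlgebra.mapDomainRingHom ℂ ε a) (fiberNorms ε f)‖ :=
        norm_le_of_norm_fiberRestrict_le ε (norm_fiberRestrict_lamAlg_le ε ha f)
    _ ≤ ‖lamAlg (MonoidAlgebra.mapDomainRingHom ℂ ε a)‖ * ‖fiberNorms ε f‖ :=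
        ContinuousLinearMap.le_opNorm _ _
    _ = ‖lamAlg (MonoidAlgebra.mapDomainRingHom ℂ ε a)‖ * ‖f‖ := by rw [norm_fiberNorms]
end
end

section
/- Let G be a group, A ⊆ G \ {1} a finite subset, n a positive integer, and let P = G ∗ F(X) ∗ F(Y) ∗ F(Z) be the free product of G with free groups F(X), F(Y), F(Z) having bases X = {x₁,…,x_n}, Y = {y_a : a ∈ A}, Z = {z_a : a ∈ A}, respectively (G, X, Y, Z viewed inside P via the canonical embeddings). Then the set T = {y_a x_i a x_i⁻¹ z_a : a ∈ A, 1 ≤ i ≤ n} consists of n·|A| pairwise distinct elements and is a basis of a free subgroup of P of rank n·|A|; that is, the homomorphism from the free group with basis indexed by A × {1,…,n} to P sending the (a,i)-th generator to y_a x_i a x_i⁻¹ z_a is injective. -/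
noncomputable section

open Monoid

section

variable {G : Type u} [Group G] (A : Finset G) (n : ℕ)

/-- The free product `P = G ∗ F(X) ∗ F(Y) ∗ F(Z)`, where `F(X)` is free with basis
`X = {x₁, …, x_n}` and `F(Y)`, `F(Z)` are free with bases `{y_a : a ∈ A}`,
`{z_a : a ∈ A}`. -/
abbrev FreeProdP (G : Type u) [Group G] (A : Finset G) (n : ℕ) : Type u :=
  Coprod (Coprod G (FreeGroup (Fin n))) (Coprod (FreeGroup ↥A) (FreeGroup ↥A))

/-- The canonical embedding `G → P`. -/
def iotaG : G →* FreeProdP G A n := Coprod.inl.comp Coprod.inl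

/-- The generator `xᵢ ∈ F(X) ⊆ P`. -/
def xGen (i : Fin n) : FreeProdP G A n := Coprod.inl (Coprod.inr (FreeGroup.of i))

/-- The generator `y_a ∈ F(Y) ⊆ P`. -/
def yGen (a : ↥A) : FreeProdP G A n := Coprod.inr (Coprod.inl (FreeGroup.of a))

/-- The generator `z_a ∈ F(Z) ⊆ P`. -/
def zGen (a : ↥A) : FreeProdP G A n := Coprod.inr (Coprod.inr (FreeGroup.of a))

/-- The family `T = {y_a xᵢ a xᵢ⁻¹ z_a : a ∈ A, 1 ≤ i ≤ n}`, indexed by `A × Fin n`. -/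
def tElt (p : ↥A × Fin n) : FreeProdP G A n :=
  yGen A n p.1 * xGen A n p.2 * iotaG A n (p.1 : G) * (xGen A n p.2)⁻¹ * zGen A n p.1

end

/-!
Map `P` to the regular wreath product `F(A × Fin n) ≀ G`, sending `g ∈ G` to itself, `y_a` to
`a⁻¹`, `z_a` to `1`, and `xᵢ` to the base element whose value at `h ∈ A` is the
generator `(h, i)` and which is `1` off `A`. Then `y_a xᵢ a xᵢ⁻¹ z_a` lands in the base group
`G → F(A × Fin n)`, and since `1 ∉ A` its value at `1` is the generator `(a, i)`. Evaluation
at `1` is a homomorphism on the base group, so composing gives the identity of `F(A × Fin n)`.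
-/

namespace FreeGroup

variable {ι P H : Type*} [Group P] [Group H]

theorem lift_comp (φ : P →* H) (t : ι → P) : lift (φ ∘ t) = φ.comp (lift t) :=
  ext_hom _ _ fun _ => by simp

theorem injective_lift_of_injective_comp {t : ι → P} (φ : P →* H)
    (h : Function.Injective (lift (φ ∘ t))) : Function.Injective (lift t) := by
  rw [lift_comp, MonoidHom.coe_comp] at h
  exact h.of_comp

theorem injective_lift_comp_iff {φ : P →* H} (hφ : Function.Injective φ) (t : ι → P) :
    Function.Injective (lift (φ ∘ t)) ↔ Function.Injective (lift t) := by
  rw [lift_comp, MonoidHom.coe_comp]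
  exact ⟨fun h => h.of_comp, hφ.comp⟩

theorem injective_lift_of_injective_lift_eval {Q D : Type*} [Group D] (f : ι → Q → D) (q : Q)
    (h : Function.Injective (lift fun i => f i q)) : Function.Injective (lift f) :=
  injective_lift_of_injective_comp (Pi.evalMonoidHom (fun _ => D) q) h

end FreeGroup

namespace RegularWreathProduct

variable {D Q : Type*} [Group D] [Group Q]

def baseHom : (Q → D) →* D ≀ᵣ Q where
  toFun f := ⟨f, 1⟩
  map_one' := rfl
  map_mul' f g := by ext <;> simp

@[simp]
theorem left_baseHom (f : Q → D) : (baseHom f).left = f := rfl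

@[simp]
theorem right_baseHom (f : Q → D) : (baseHom f).right = 1 := rfl

theorem baseHom_injective : Function.Injective (baseHom : (Q → D) →* D ≀ᵣ Q) :=
  fun _ _ h => congrArg left h

end RegularWreathProduct

open RegularWreathProduct

section

variable {G : Type u} (A : Finset G) (n : ℕ)

open Classical in
def xBase (i : Fin n) (h : G) : FreeGroup (↥A × Fin n) :=
  if hh : h ∈ A then FreeGroup.of (⟨h, hh⟩, i) else 1

theorem xBase_coe (a : ↥A) (i : Fin n) : xBase A n i a = FreeGroup.of (a, i) := by
  simp [xBase]

theorem xBase_of_notMem {h : G} (hh : h ∉ A) (i : Fin n) : xBase A n i h = 1 := by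
  simp [xBase, hh]

variable [Group G]

def wreathRep : FreeProdP G A n →* FreeGroup (↥A × Fin n) ≀ᵣ G :=
  Coprod.lift
    (Coprod.lift RegularWreathProduct.inl (FreeGroup.lift fun i => baseHom (xBase A n i)))
    (Coprod.lift (FreeGroup.lift fun a => RegularWreathProduct.inl (a : G)⁻¹) 1)

theorem wreathRep_tElt (p : ↥A × Fin n) :
    wreathRep A n (tElt A n p) =
      baseHom fun h => xBase A n p.2 (p.1 * h) * (xBase A n p.2 h)⁻¹ := by
  ext h <;> simp [wreathRep, tElt, iotaG, xGen, yGen, zGen]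

end

theorem tElt_freely_generates_general {G : Type u} [Group G] (A : Finset G) (hA : (1 : G) ∉ A)
    (n : ℕ) :
    Function.Injective (FreeGroup.lift (tElt (G := G) (A := A) (n := n))) := by
  refine FreeGroup.injective_lift_of_injective_comp (wreathRep A n) ?_
  have hrep : wreathRep A n ∘ tElt A n =
      baseHom ∘ fun p h => xBase A n p.2 (p.1 * h) * (xBase A n p.2 h)⁻¹ :=
    funext (wreathRep_tElt A n)
  rw [hrep, FreeGroup.injective_lift_comp_iff baseHom_injective]
  refine FreeGroup.injective_lift_of_injective_lift_eval _ 1 ?_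
  have hgen : (fun p : ↥A × Fin n => xBase A n p.2 (p.1 * 1) * (xBase A n p.2 1)⁻¹) =
      FreeGroup.of := by
    funext p
    rw [mul_one, xBase_coe, xBase_of_notMem A n hA, inv_one, mul_one]
  rw [hgen, FreeGroup.lift_of_eq_id]
  exact Function.injective_id

/-- **Part of Corollary 4.5**. For a group `G`, a finite subset `A ⊆ G \ {1}` and
`P = G ∗ F(X) ∗ F(Y) ∗ F(Z)` as above, the set
`T = {y_a xᵢ a xᵢ⁻¹ z_a : a ∈ A, 1 ≤ i ≤ n}` is a basis of a free subgroup of `P` of rank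
`n|A|`: the homomorphism from the free group on `A × {1, …, n}` to `P` sending the
`(a, i)`-th generator to `y_a xᵢ a xᵢ⁻¹ z_a` is injective (in particular the elements of
`T` are pairwise distinct). -/
theorem tElt_freely_generates {G : Type u} [Group G] (A : Finset G) (hA : (1 : G) ∉ A)
    (n : ℕ) (hn : 0 < n) :
    Function.Injective (FreeGroup.lift (tElt (G := G) (A := A) (n := n))) :=
  tElt_freely_generates_general A hA n
end
end
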